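/- arXiv:1602.08406 — 2 statements merged into one kernel-verified Lean document; each statement's English description precedes it below -/
import Mathlib

section
/- Symmetry of closures: let κ be a relation on types such that (θ',θ) ∈ κ whenever (θ,θ') ∈ κ. Then its closure κ* is also symmetric: (θ',θ) ∈ κ* whenever (θ,θ') ∈ κ*. -/
/-! # SystemReF : types, orders, cast relations -/

abbrev TVar := ℕ
abbrev Loc := ℕ

inductive Ty : Type where
  | unit : Ty
  | int : Ty
  | tvar : TVar → Ty
  | ref : Ty → Ty
  | prod : Ty → Ty → Ty
  | arrow : Ty → Ty → Ty
  | all : TVar → Ty → Ty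
  | ex : TVar → Ty → Ty
  deriving DecidableEq

namespace Ty

/-- Free type variables. -/
def ftv : Ty → Finset TVar
  | unit => ∅
  | int => ∅
  | tvar a => {a}
  | ref t => t.ftv
  | prod t₁ t₂ => t₁.ftv ∪ t₂.ftv
  | arrow t₁ t₂ => t₁.ftv ∪ t₂.ftv
  | all a t => t.ftv.erase a
  | ex a t => t.ftv.erase a

/-- Substitution of a single type variable. -/
def subst : Ty → TVar → Ty → Ty
  | unit, _, _ => unit
  | int, _, _ => int
  | tvar b, a, s => if b = a then s else tvar b
  | ref t, a, s => ref (t.subst a s)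
  | prod t₁ t₂, a, s => prod (t₁.subst a s) (t₂.subst a s)
  | arrow t₁ t₂, a, s => arrow (t₁.subst a s) (t₂.subst a s)
  | all b t, a, s => if b = a then all b t else all b (t.subst a s)
  | ex b t, a, s => if b = a then ex b t else ex b (t.subst a s)

/-- `a` does not occur free in the scope of a `ref` constructor. -/
def noRefOcc (a : TVar) : Ty → Prop
  | unit => True
  | int => True
  | tvar _ => True
  | ref t => a ∉ t.ftv
  | prod t₁ t₂ => noRefOcc a t₁ ∧ noRefOcc a t₂
  | arrow t₁ t₂ => noRefOcc a t₁ ∧ noRefOcc a t₂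
  | all b t => b = a ∨ noRefOcc a t
  | ex b t => b = a ∨ noRefOcc a t

/-- The set of types `θ'` such that `ref θ'` occurs (as a subterm) in the given type. -/
def refParts : Ty → Set Ty
  | unit => ∅
  | int => ∅
  | tvar _ => ∅
  | ref t => {t} ∪ t.refParts
  | prod t₁ t₂ => t₁.refParts ∪ t₂.refParts
  | arrow t₁ t₂ => t₁.refParts ∪ t₂.refParts
  | all _ t => t.refParts
  | ex _ t => t.refParts

end Ty

/-- `a` strictly precedes `b` in the ordered list `Φ` of type variables. -/
def precedes (Φ : List TVar) (a b : TVar) : Prop :=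
  ∃ i j : ℕ, i < j ∧ Φ[i]? = some a ∧ Φ[j]? = some b

/-- The order `≤_Φ` on types. -/
inductive TLe (Φ : List TVar) : Ty → Ty → Prop
  | refl (t : Ty) : TLe Φ t t
  | trans {t₁ t₂ t₃} : TLe Φ t₁ t₂ → TLe Φ t₂ t₃ → TLe Φ t₁ t₃
  | var {t : Ty} {a : TVar} : (∀ b ∈ t.ftv, precedes Φ b a) → TLe Φ t (.tvar a)
  | ref {t t'} : TLe Φ t t' → TLe Φ (.ref t) (.ref t')
  | prod {t₁ t₁' t₂ t₂'} : TLe Φ t₁ t₁' → TLe Φ t₂ t₂' →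
      TLe Φ (.prod t₁ t₂) (.prod t₁' t₂')
  | arrow {t₁ t₁' t₂ t₂'} : TLe Φ t₁ t₁' → TLe Φ t₂ t₂' →
      TLe Φ (.arrow t₁ t₂) (.arrow t₁' t₂')
  | all {a t t'} : a ∉ Φ → TLe Φ t t' → TLe Φ (.all a t) (.all a t')
  | ex {a t t'} : a ∉ Φ → TLe Φ t t' → TLe Φ (.ex a t) (.ex a t')

/-- Typing functions: (multi-valued) maps from locations to sets of types. -/
abbrev TyFun := Loc → Set Ty

def TFdom (φ : TyFun) : Set Loc := {l | (φ l).Nonempty}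

def TFunion (φ φ' : TyFun) : TyFun := fun l => φ l ∪ φ' l

def TFdisj (φ φ' : TyFun) : Prop := ∀ l, φ l = ∅ ∨ φ' l = ∅

def TFle (φ φ' : TyFun) : Prop := ∀ l, φ l ⊆ φ' l

def TFempty : TyFun := fun _ => ∅

def TFsingle (l : Loc) (θ : Ty) : TyFun := fun l' => if l' = l then {θ} else ∅

/-- Type variables occurring in the codomain of a typing function (its support). -/
def suppTF (φ : TyFun) : Set TVar := {a | ∃ l θ, θ ∈ φ l ∧ a ∈ θ.ftv}

/-- Validity of a typing function w.r.t. the type-variable order `Φ`. -/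
def ValidTF (Φ : List TVar) (φ : TyFun) : Prop :=
  ∀ l : Loc, ∃ θ₀ : Ty, ∀ θ ∈ φ l, TLe Φ θ₀ θ

/-- The type variables in the support of a relation on types. -/
def RelSupp (κ : Ty → Ty → Prop) : Set TVar :=
  {a | ∃ θ θ', κ θ θ' ∧ (a ∈ θ.ftv ∨ a ∈ θ'.ftv)}

/-- Closure `κ*` of a cast relation. -/
inductive Clos (κ : Ty → Ty → Prop) : Ty → Ty → Prop
  | base {θ θ'} : κ θ θ' → Clos κ θ θ'
  | refl (θ : Ty) : Clos κ θ θ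
  | trans {θ θ'' θ'} : Clos κ θ θ'' → Clos κ θ'' θ' → Clos κ θ θ'
  | refInv {θ θ'} : Clos κ (.ref θ) (.ref θ') → Clos κ θ θ'
  | prodIntro {θ₁ θ₁' θ₂ θ₂'} : Clos κ θ₁ θ₁' → Clos κ θ₂ θ₂' →
      Clos κ (.prod θ₁ θ₂) (.prod θ₁' θ₂')
  | prodFst {θ₁ θ₁' θ₂ θ₂'} : Clos κ (.prod θ₁ θ₂) (.prod θ₁' θ₂') → Clos κ θ₁ θ₁'
  | prodSnd {θ₁ θ₁' θ₂ θ₂'} : Clos κ (.prod θ₁ θ₂) (.prod θ₁' θ₂') → Clos κ θ₂ θ₂'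
  | arrowIntro {θ₁ θ₁' θ₂ θ₂'} : Clos κ θ₁' θ₁ → Clos κ θ₂ θ₂' →
      Clos κ (.arrow θ₁ θ₂) (.arrow θ₁' θ₂')
  | arrowArg {θ₁ θ₁' θ₂ θ₂'} : Clos κ (.arrow θ₁' θ₂) (.arrow θ₁ θ₂') → Clos κ θ₁ θ₁'
  | arrowRes {θ₁ θ₁' θ₂ θ₂'} : Clos κ (.arrow θ₁ θ₂) (.arrow θ₁' θ₂') → Clos κ θ₂ θ₂'
  | allCong {a θ θ'} : Clos κ θ θ' → a ∉ RelSupp κ → Clos κ (.all a θ) (.all a θ')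
  | exCong {a θ θ'} : Clos κ θ θ' → a ∉ RelSupp κ → Clos κ (.ex a θ) (.ex a θ')
  | allInst {a θ θ'} (θ₀ : Ty) : Clos κ (.all a θ) (.all a θ') →
      θ.noRefOcc a → θ'.noRefOcc a → Clos κ (θ.subst a θ₀) (θ'.subst a θ₀)
  | exInst {a θ θ'} (θ₀ : Ty) : Clos κ (.ex a θ) (.ex a θ') →
      θ.noRefOcc a → θ'.noRefOcc a → Clos κ (θ.subst a θ₀) (θ'.subst a θ₀)

/-- The base cast relation induced by a typing function. -/
def CastBase (φ : TyFun) : Ty → Ty → Prop := fun θ θ' => ∃ l, θ ∈ φ l ∧ θ' ∈ φ l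

/-- The cast relation `Cast(φ)` induced by a typing function. -/
def Cast (φ : TyFun) : Ty → Ty → Prop := Clos (CastBase φ)

/-- `κ(θ)`: the cast class of `θ`. -/
def ClassOf (κ : Ty → Ty → Prop) (θ : Ty) : Set Ty := {θ' | κ θ θ'}

/-- `min(κ(θ))`: the minimal types of the cast class of `θ`. -/
def MinClass (Φ : List TVar) (κ : Ty → Ty → Prop) (θ : Ty) : Set Ty :=
  {θ' | θ' ∈ ClassOf κ θ ∧ ∀ θ'' ∈ ClassOf κ θ, TLe Φ θ'' θ' → θ'' = θ'}

/-- A cast relation is valid if every cast class has a lower bound. -/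
def ValidCastRel (Φ : List TVar) (κ : Ty → Ty → Prop) : Prop :=
  ∀ θ : Ty, ∃ θ' : Ty, ∀ θ'' ∈ ClassOf κ θ, TLe Φ θ' θ''

/-- Skeleton equivalence of types. -/
inductive SkelEq : Ty → Ty → Prop
  | refl (t : Ty) : SkelEq t t
  | ref (t t' : Ty) : SkelEq (.ref t) (.ref t')
  | prod {t₁ t₁' t₂ t₂'} : SkelEq t₁ t₁' → SkelEq t₂ t₂' →
      SkelEq (.prod t₁ t₂) (.prod t₁' t₂')
  | arrow {t₁ t₁' t₂ t₂'} : SkelEq t₁ t₁' → SkelEq t₂ t₂' →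
      SkelEq (.arrow t₁ t₂) (.arrow t₁' t₂')
  | all {a t t'} : SkelEq t t' → SkelEq (.all a t) (.all a t')
  | ex {a t t'} : SkelEq t t' → SkelEq (.ex a t) (.ex a t')

/-- The closure of a symmetric relation on types is symmetric. -/
theorem clos_symm (κ : Ty → Ty → Prop) (hκ : ∀ θ θ', κ θ θ' → κ θ' θ) :
    ∀ θ θ', Clos κ θ θ' → Clos κ θ' θ := by
  intro θ θ' h
  induction h with
  | base h => exact .base (hκ _ _ h)
  | refl θ => exact .refl θ
  | trans _ _ ih1 ih2 => exact .trans ih2 ih1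
  | refInv _ ih => exact .refInv ih
  | prodIntro _ _ ih1 ih2 => exact .prodIntro ih1 ih2
  | prodFst _ ih => exact .prodFst ih
  | prodSnd _ ih => exact .prodSnd ih
  | arrowIntro _ _ ih1 ih2 => exact .arrowIntro ih1 ih2
  | arrowArg _ ih => exact .arrowArg ih
  | arrowRes _ ih => exact .arrowRes ih
  | allCong _ ha ih => exact .allCong ih ha
  | exCong _ ha ih => exact .exCong ih ha
  | allInst θ₀ _ h1 h2 ih => exact .allInst θ₀ ih h2 h1
  | exInst θ₀ _ h1 h2 ih => exact .exInst θ₀ ih h2 h1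
end

section
/- For every valid typing function φ, the cast relation Cast(φ) is symmetric: if (θ,θ') ∈ Cast(φ) then (θ',θ) ∈ Cast(φ). -/
/-- For every valid typing function `φ`, `Cast(φ)` is symmetric. -/
theorem cast_symm (Φ : List TVar) (φ : TyFun) (hφ : ValidTF Φ φ) :
    ∀ θ θ', Cast φ θ θ' → Cast φ θ' θ := by
  intro θ θ' h
  induction h with
  | base h => obtain ⟨l, h1, h2⟩ := h; exact .base ⟨l, h2, h1⟩
  | refl θ => exact .refl θ
  | trans _ _ ih1 ih2 => exact .trans ih2 ih1
  | refInv _ ih => exact .refInv ih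
  | prodIntro _ _ ih1 ih2 => exact .prodIntro ih1 ih2
  | prodFst _ ih => exact .prodFst ih
  | prodSnd _ ih => exact .prodSnd ih
  | arrowIntro _ _ ih1 ih2 => exact .arrowIntro ih1 ih2
  | arrowArg _ ih => exact .arrowArg ih
  | arrowRes _ ih => exact .arrowRes ih
  | allCong _ ha ih => exact .allCong ih ha
  | exCong _ ha ih => exact .exCong ih ha
  | allInst θ₀ _ h1 h2 ih => exact .allInst θ₀ ih h2 h1
  | exInst θ₀ _ h1 h2 ih => exact .exInst θ₀ ih h2 h1
end
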